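/- (Head factorization of βY) Let →Y be the contextual closure of the fixpoint rule Y p ↦Y p (Y p), where Y is a constant. Then →β ∪ →Y satisfies head factorization: (→β ∪ →Y)* ⊆ (h→β ∪ h→Y)* · (¬h→β ∪ ¬h→Y)*. In particular, →Y satisfies head factorization F(h→Y, ¬h→Y), the root linear swap ¬h→β · ↦Y ⊆ h→Y · (→β)* holds, and ↦Y is substitutive. -/

import Mathlib

/-! Untyped λ-terms over a set `K` of constants, in de Bruijn representation
(so that working modulo α-equivalence and capture-avoiding substitution are
built in). -/

inductive Term (K : Type) : Type where
  | var : ℕ → Term K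
  | const : K → Term K
  | lam : Term K → Term K
  | app : Term K → Term K → Term K

namespace Term

variable {K : Type}

/-- Shifting of free de Bruijn indices (≥ cutoff `c`) by one. -/
def lift (c : ℕ) : Term K → Term K
  | var m => if m < c then var m else var (m + 1)
  | const k => const k
  | lam t => lam (lift (c + 1) t)
  | app t s => app (lift c t) (lift c s)

/-- Capture-avoiding substitution of `u` for the free variable `n`. -/
def subst (n : ℕ) (u : Term K) : Term K → Term K
  | var m => if m = n then u else if n < m then var (m - 1) else var m
  | const k => const k
  | lam t => lam (subst (n + 1) (lift 0 u) t)
  | app t s => app (subst n u t) (subst n u s)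

/-- Values: variables, constants and abstractions. -/
def IsValue : Term K → Prop
  | var _ => True
  | const _ => True
  | lam _ => True
  | app _ _ => False

end Term

/-- One-hole contexts: C ::= ⟨·⟩ | C t | t C | λ.C -/
inductive Ctx (K : Type) : Type where
  | hole : Ctx K
  | appL : Ctx K → Term K → Ctx K
  | appR : Term K → Ctx K → Ctx K
  | lam : Ctx K → Ctx K

namespace Ctx

variable {K : Type}

/-- Plugging a term into the hole of a context (possibly capturing variables). -/
def plug : Ctx K → Term K → Term K
  | hole, t => t
  | appL C s, t => Term.app (C.plug t) s
  | appR s C, t => Term.app s (C.plug t)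
  | lam C, t => Term.lam (C.plug t)

/-- Applicative spine contexts ⟨·⟩ t1 … tn. -/
inductive IsSpine : Ctx K → Prop
  | hole : IsSpine hole
  | appL {C : Ctx K} (t : Term K) : IsSpine C → IsSpine (appL C t)

/-- Head contexts λx1…λxk.⟨·⟩ t1…tn. -/
inductive IsHead : Ctx K → Prop
  | spine {C : Ctx K} : IsSpine C → IsHead C
  | lam {C : Ctx K} : IsHead C → IsHead (lam C)

/-- Weak contexts W ::= ⟨·⟩ | W t | t W. -/
inductive IsWeak : Ctx K → Prop
  | hole : IsWeak hole
  | appL {C : Ctx K} (t : Term K) : IsWeak C → IsWeak (appL C t)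
  | appR (t : Term K) {C : Ctx K} : IsWeak C → IsWeak (appR t C)

/-- Left contexts L ::= ⟨·⟩ | L t | v L with v a value. -/
inductive IsLeft : Ctx K → Prop
  | hole : IsLeft hole
  | appL {C : Ctx K} (t : Term K) : IsLeft C → IsLeft (appL C t)
  | appR {v : Term K} {C : Ctx K} : v.IsValue → IsLeft C → IsLeft (appR v C)

end Ctx

/-- Contextual closure of a root rule. -/
def Step {K : Type} (root : Term K → Term K → Prop) (t s : Term K) : Prop :=
  ∃ (C : Ctx K) (r r' : Term K), root r r' ∧ t = C.plug r ∧ s = C.plug r'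

/-- Closure of a root rule under head contexts. -/
def HeadStep {K : Type} (root : Term K → Term K → Prop) (t s : Term K) : Prop :=
  ∃ (C : Ctx K) (r r' : Term K), C.IsHead ∧ root r r' ∧ t = C.plug r ∧ s = C.plug r'

/-- Closure of a root rule under non-head contexts. -/
def NonHeadStep {K : Type} (root : Term K → Term K → Prop) (t s : Term K) : Prop :=
  ∃ (C : Ctx K) (r r' : Term K), ¬ C.IsHead ∧ root r r' ∧ t = C.plug r ∧ s = C.plug r'

/-- Closure of a root rule under weak contexts. -/
def WeakStep {K : Type} (root : Term K → Term K → Prop) (t s : Term K) : Prop :=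
  ∃ (C : Ctx K) (r r' : Term K), C.IsWeak ∧ root r r' ∧ t = C.plug r ∧ s = C.plug r'

/-- Closure of a root rule under non-weak contexts. -/
def NonWeakStep {K : Type} (root : Term K → Term K → Prop) (t s : Term K) : Prop :=
  ∃ (C : Ctx K) (r r' : Term K), ¬ C.IsWeak ∧ root r r' ∧ t = C.plug r ∧ s = C.plug r'

/-- Closure of a root rule under left contexts. -/
def LeftStep {K : Type} (root : Term K → Term K → Prop) (t s : Term K) : Prop :=
  ∃ (C : Ctx K) (r r' : Term K), C.IsLeft ∧ root r r' ∧ t = C.plug r ∧ s = C.plug r'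

/-- Closure of a root rule under non-left contexts. -/
def NonLeftStep {K : Type} (root : Term K → Term K → Prop) (t s : Term K) : Prop :=
  ∃ (C : Ctx K) (r r' : Term K), ¬ C.IsLeft ∧ root r r' ∧ t = C.plug r ∧ s = C.plug r'

/-- A root rule is substitutive if it is stable under substitution. -/
def Substitutive {K : Type} (root : Term K → Term K → Prop) : Prop :=
  ∀ r r' n q, root r r' → root (Term.subst n q r) (Term.subst n q r')

/-- The β root rule: (λx.p) q ↦β p{x:=q}. -/
def BetaRoot {K : Type} : Term K → Term K → Prop := fun t s =>
  ∃ p q, t = Term.app (Term.lam p) q ∧ s = Term.subst 0 q p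

/-- The βv root rule: (λx.p) v ↦βv p{x:=v}, v a value. -/
def BetavRoot {K : Type} : Term K → Term K → Prop := fun t s =>
  ∃ p v, v.IsValue ∧ t = Term.app (Term.lam p) v ∧ s = Term.subst 0 v p

/-- The fixpoint root rule Y p ↦Y p (Y p), where the constant Y is represented
by `Term.const ()`. -/
def YRoot : Term Unit → Term Unit → Prop := fun t s =>
  ∃ p, t = Term.app (Term.const ()) p ∧
    s = Term.app p (Term.app (Term.const ()) p)

namespace BetaY

open Term

abbrev T := Term Unit

/-! ### de Bruijn substitution infrastructure -/

def cons (b : T) (σ : ℕ → T) : ℕ → T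
  | 0 => b
  | i+1 => σ i

def up (σ : ℕ → T) : ℕ → T := cons (Term.var 0) (fun i => Term.lift 0 (σ i))

def sub (σ : ℕ → T) : T → T
  | .var i => σ i
  | .const k => .const k
  | .lam t => .lam (sub (up σ) t)
  | .app t s => .app (sub σ t) (sub σ s)

theorem lift_lift (t : T) : ∀ c c', c' ≤ c →
    Term.lift (c+1) (Term.lift c' t) = Term.lift c' (Term.lift c t) := by
  induction t with
  | var m => 
      intro c c' h
      simp only [Term.lift]
      by_cases h1 : m < c'
      · have h2 : m < c := by omega
        have h3 : m < c + 1 := by omega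
        simp [Term.lift, h1, h2, h3]
      · have h2 : ¬ m + 1 < c' := by omega
        by_cases h4 : m < c
        · have h5 : m + 1 < c + 1 := by omega
          simp [Term.lift, h1, h2, h4, h5]
        · have h5 : ¬ m + 1 < c + 1 := by omega
          simp [Term.lift, h1, h2, h4, h5]
  | const k => intros; simp [Term.lift]
  | lam t ih => intro c c' h; simp only [Term.lift]; rw [ih]; omega
  | app t s iht ihs => intro c c' h; simp only [Term.lift]; rw [iht _ _ h, ihs _ _ h]

theorem sub_ext {σ σ' : ℕ → T} (t : T) (h : ∀ i, σ i = σ' i) : sub σ t = sub σ' t := by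
  induction t generalizing σ σ' with
  | var i => exact h i
  | const k => rfl
  | lam t ih =>
      simp only [sub]; rw [ih]
      intro i; cases i with
      | zero => rfl
      | succ i => simp only [up, cons, h i]
  | app t s iht ihs => simp only [sub]; rw [iht h, ihs h]

theorem lift_sub (t : T) : ∀ (c : ℕ) (σ : ℕ → T),
    Term.lift c (sub σ t) = sub (fun i => Term.lift c (σ i)) t := by
  induction t with
  | var i => intros; rfl
  | const k => intros; rfl
  | lam t ih =>
      intro c σ; simp only [sub, Term.lift]; rw [ih]
      congr 1; apply sub_ext; intro i
      cases i with
      | zero => simp [up, cons, Term.lift]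
      | succ i => simp only [up, cons]; exact lift_lift _ c 0 (Nat.zero_le c)
  | app t s iht ihs => intro c σ; simp only [sub, Term.lift]; rw [iht, ihs]

theorem sub_lift (t : T) : ∀ (c : ℕ) (σ : ℕ → T),
    sub σ (Term.lift c t) = sub (fun i => if i < c then σ i else σ (i+1)) t := by
  induction t with
  | var m =>
      intro c σ; simp only [Term.lift]
      by_cases h : m < c <;> simp [h, sub]
  | const k => intros; rfl
  | lam t ih =>
      intro c σ; simp only [Term.lift, sub]; rw [ih]
      congr 1; apply sub_ext; intro i
      cases i with
      | zero => simp [up, cons]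
      | succ i =>
          simp only [up, cons]
          by_cases h : i < c
          · simp [h, Nat.succ_lt_succ h]
          · have : ¬ (i + 1 < c + 1) := by omega
            simp [h, this]
  | app t s iht ihs => intro c σ; simp only [Term.lift, sub]; rw [iht, ihs]

theorem sub_sub (t : T) : ∀ (σ τ : ℕ → T),
    sub σ (sub τ t) = sub (fun i => sub σ (τ i)) t := by
  induction t with
  | var i => intros; rfl
  | const k => intros; rfl
  | lam t ih =>
      intro σ τ; simp only [sub]; rw [ih]
      congr 1; apply sub_ext; intro i
      cases i with
      | zero => rfl
      | succ i =>
          simp only [up, cons]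
          rw [sub_lift, lift_sub]
          apply sub_ext; intro j; rfl
  | app t s iht ihs => intro σ τ; simp only [sub]; rw [iht, ihs]

/-- `subst` as a simultaneous substitution. -/
def sσ (n : ℕ) (u : T) : ℕ → T := fun i =>
  if i = n then u else if n < i then .var (i-1) else .var i

theorem subst_eq_sub (t : T) : ∀ (n : ℕ) (u : T), Term.subst n u t = sub (sσ n u) t := by
  induction t with
  | var m => intro n u; simp only [Term.subst, sub, sσ]
  | const k => intros; rfl
  | lam t ih =>
      intro n u; simp only [Term.subst, sub]; rw [ih]
      congr 1; apply sub_ext; intro i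
      cases i with
      | zero => simp [sσ, up, cons]
      | succ i =>
          simp only [sσ, up, cons]
          by_cases h : i = n
          · simp [h]
          · by_cases h2 : n < i
            · have h3 : ¬ (i+1 = n+1) := by omega
              have h4 : n+1 < i+1 := by omega
              simp [h, h2, h3, h4, Term.lift]
              omega
            · have h3 : ¬ (i+1 = n+1) := by omega
              have h4 : ¬ (n+1 < i+1) := by omega
              simp [h, h2, h3, h4, Term.lift]
  | app t s iht ihs => intro n u; simp only [Term.subst, sub]; rw [iht, ihs]

theorem sub_var (t : T) : sub (fun i => Term.var i) t = t := by
  induction t with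
  | var i => rfl
  | const k => rfl
  | lam t ih =>
      simp only [sub]
      rw [sub_ext _ (fun i => ?_), ih]
      cases i with
      | zero => rfl
      | succ i => simp [up, cons, Term.lift]
  | app t s iht ihs => simp only [sub]; rw [iht, ihs]

theorem subst0_eq (q p : T) : Term.subst 0 q p = sub (cons q Term.var) p := by
  rw [subst_eq_sub]; apply sub_ext; intro i
  cases i with
  | zero => rfl
  | succ i => simp [sσ, cons]

/-- lift through subst 0. -/
theorem lift_subst0 (c : ℕ) (q p : T) :
    Term.lift c (Term.subst 0 q p) = Term.subst 0 (Term.lift c q) (Term.lift (c+1) p) := by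
  rw [subst0_eq, lift_sub, subst0_eq, sub_lift]
  apply sub_ext; intro i
  cases i with
  | zero => simp [cons]
  | succ i =>
      simp only [cons]
      by_cases h : i + 1 < c + 1
      · have : i < c := by omega
        simp [cons, Term.lift, this]
      · have : ¬ i < c := by omega
        simp [cons, Term.lift, this]

/-- Substituting at 0 under an `up`-ed simultaneous substitution. -/
theorem subst0_sub_up (B : T) (σ : ℕ → T) (p : T) :
    Term.subst 0 B (sub (up σ) p) = sub (cons B σ) p := by
  rw [subst0_eq, sub_sub]
  apply sub_ext; intro i
  cases i with
  | zero => rfl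
  | succ i =>
      simp only [up, cons]
      rw [sub_lift]
      have : (fun j => if j < 0 then cons B Term.var j else cons B Term.var (j+1)) =
        (fun j => Term.var j) := by funext j; simp [cons]
      rw [this, sub_var]

theorem sub_subst0 (σ : ℕ → T) (q p : T) :
    sub σ (Term.subst 0 q p) = sub (cons (sub σ q) σ) p := by
  rw [subst0_eq, sub_sub]
  apply sub_ext; intro i
  cases i with
  | zero => rfl
  | succ i => rfl

end BetaY
namespace BetaY

/-! ### Structural presentations of the closures -/

def Root (b y : Prop) : T → T → Prop := fun r r' =>
  (b ∧ BetaRoot r r') ∨ (y ∧ YRoot r r')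

inductive CStep (R : T → T → Prop) : T → T → Prop
  | root {r r'} : R r r' → CStep R r r'
  | appL {t t'} (s) : CStep R t t' → CStep R (.app t s) (.app t' s)
  | appR (t) {s s'} : CStep R s s' → CStep R (.app t s) (.app t s')
  | lam {t t'} : CStep R t t' → CStep R (.lam t) (.lam t')

inductive SStep (R : T → T → Prop) : T → T → Prop
  | root {r r'} : R r r' → SStep R r r'
  | appL {t t'} (s) : SStep R t t' → SStep R (.app t s) (.app t' s)

inductive HStep (R : T → T → Prop) : T → T → Prop
  | spine {t t'} : SStep R t t' → HStep R t t'
  | lam {t t'} : HStep R t t' → HStep R (.lam t) (.lam t')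

theorem cstep_plug {R : T → T → Prop} (C : Ctx Unit) {r r' : T} (h : R r r') :
    CStep R (C.plug r) (C.plug r') := by
  induction C with
  | hole => exact .root h
  | appL C s ih => exact .appL s ih
  | appR s C ih => exact .appR s ih
  | lam C ih => exact .lam ih

theorem step_iff {R : T → T → Prop} {t s : T} : Step R t s ↔ CStep R t s := by
  constructor
  · rintro ⟨C, r, r', hr, rfl, rfl⟩; exact cstep_plug C hr
  · intro h
    induction h with
    | root h => exact ⟨.hole, _, _, h, rfl, rfl⟩
    | appL s _ ih => obtain ⟨C, r, r', hr, rfl, rfl⟩ := ih; exact ⟨.appL C s, r, r', hr, rfl, rfl⟩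
    | appR t _ ih => obtain ⟨C, r, r', hr, rfl, rfl⟩ := ih; exact ⟨.appR t C, r, r', hr, rfl, rfl⟩
    | lam _ ih => obtain ⟨C, r, r', hr, rfl, rfl⟩ := ih; exact ⟨.lam C, r, r', hr, rfl, rfl⟩

theorem sstep_exists {R : T → T → Prop} {t s : T} (h : SStep R t s) :
    ∃ (C : Ctx Unit) (r r' : T), C.IsSpine ∧ R r r' ∧ t = C.plug r ∧ s = C.plug r' := by
  induction h with
  | root h => exact ⟨.hole, _, _, .hole, h, rfl, rfl⟩
  | appL s _ ih =>
      obtain ⟨C, r, r', hC, hr, rfl, rfl⟩ := ih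
      exact ⟨.appL C s, r, r', .appL s hC, hr, rfl, rfl⟩

theorem headstep_iff {R : T → T → Prop} {t s : T} : HeadStep R t s ↔ HStep R t s := by
  constructor
  · rintro ⟨C, r, r', hC, hr, rfl, rfl⟩
    induction hC with
    | spine hC =>
        apply HStep.spine
        induction hC with
        | hole => exact .root hr
        | appL s _ ih => exact .appL s ih
    | lam _ ih => exact .lam ih
  · intro h
    induction h with
    | spine h =>
        obtain ⟨C, r, r', hC, hr, rfl, rfl⟩ := sstep_exists h
        exact ⟨C, r, r', .spine hC, hr, rfl, rfl⟩
    | lam _ ih =>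
        obtain ⟨C, r, r', hC, hr, rfl, rfl⟩ := ih
        exact ⟨.lam C, r, r', .lam hC, hr, rfl, rfl⟩

end BetaY
namespace BetaY

/-! ### Producing non-head steps -/

theorem not_isHead_appR (t : T) (C : Ctx Unit) : ¬ (Ctx.appR t C).IsHead := by
  rintro (h | h); · cases h

theorem not_isSpine_lam (C : Ctx Unit) : ¬ (Ctx.lam C).IsSpine := by rintro ⟨⟩

theorem not_isHead_appL_lam (C : Ctx Unit) (s : T) : ¬ (Ctx.appL (Ctx.lam C) s).IsHead := by
  rintro (h | h)
  cases h with
  | appL _ h => exact not_isSpine_lam _ h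

theorem nh_appR {R : T → T → Prop} {s s' : T} (t : T) (h : Step R s s') :
    NonHeadStep R (.app t s) (.app t s') := by
  obtain ⟨C, r, r', hr, rfl, rfl⟩ := h
  exact ⟨.appR t C, r, r', not_isHead_appR t C, hr, rfl, rfl⟩

theorem nh_appL_lam {R : T → T → Prop} {p p' : T} (s : T) (h : Step R p p') :
    NonHeadStep R (.app (.lam p) s) (.app (.lam p') s) := by
  obtain ⟨C, r, r', hr, rfl, rfl⟩ := h
  exact ⟨.appL (.lam C) s, r, r', not_isHead_appL_lam C s, hr, rfl, rfl⟩

theorem nh_appL {R : T → T → Prop} {t t' : T} (s : T) (h : NonHeadStep R t t') :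
    NonHeadStep R (.app t s) (.app t' s) := by
  obtain ⟨C, r, r', hC, hr, rfl, rfl⟩ := h
  refine ⟨.appL C s, r, r', ?_, hr, rfl, rfl⟩
  rintro (h | h)
  cases h with
  | appL _ h => exact hC (.spine h)

theorem nh_lam {R : T → T → Prop} {t t' : T} (h : NonHeadStep R t t') :
    NonHeadStep R (.lam t) (.lam t') := by
  obtain ⟨C, r, r', hC, hr, rfl, rfl⟩ := h
  refine ⟨.lam C, r, r', ?_, hr, rfl, rfl⟩
  rintro (h | h)
  · exact not_isSpine_lam _ h
  · exact hC h

/-! ### Parallel reduction -/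

inductive Par (b y : Prop) : T → T → Prop
  | var (n) : Par b y (.var n) (.var n)
  | const (k) : Par b y (.const k) (.const k)
  | lam {t t'} : Par b y t t' → Par b y (.lam t) (.lam t')
  | app {t t' s s'} : Par b y t t' → Par b y s s' → Par b y (.app t s) (.app t' s')
  | beta {p p' q q'} (hb : b) : Par b y p p' → Par b y q q' →
      Par b y (.app (.lam p) q) (Term.subst 0 q' p')
  | yfix {p p'} (hy : y) : Par b y p p' →
      Par b y (.app (.const ()) p) (.app p' (.app (.const ()) p'))

theorem Par.refl {b y : Prop} (t : T) : Par b y t t := by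
  induction t with
  | var n => exact .var n
  | const k => exact .const k
  | lam t ih => exact .lam ih
  | app t s iht ihs => exact .app iht ihs

theorem Par.lift {b y : Prop} {t t' : T} (h : Par b y t t') (c : ℕ) :
    Par b y (Term.lift c t) (Term.lift c t') := by
  induction h generalizing c with
  | var n => simp only [Term.lift]; split <;> exact .var _
  | const k => exact .const k
  | lam _ ih => exact .lam (ih (c+1))
  | app _ _ iht ihs => exact .app (iht c) (ihs c)
  | beta hb _ _ ihp ihq =>
      simp only [Term.lift]
      rw [lift_subst0]
      exact .beta hb (ihp (c+1)) (ihq c)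
  | yfix hy _ ih =>
      simp only [Term.lift]
      exact .yfix hy (ih c)

theorem Par.sub {b y : Prop} {t t' : T} (h : Par b y t t') {σ σ' : ℕ → T}
    (hσ : ∀ i, Par b y (σ i) (σ' i)) : Par b y (sub σ t) (sub σ' t') := by
  induction h generalizing σ σ' with
  | var n => exact hσ n
  | const k => exact .const k
  | lam _ ih =>
      refine .lam (ih fun i => ?_)
      cases i with
      | zero => exact .var 0
      | succ i => exact (hσ i).lift 0
  | app _ _ iht ihs => exact .app (iht hσ) (ihs hσ)
  | beta hb _ _ ihp ihq =>
      simp only [BetaY.sub]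
      rw [sub_subst0, ← subst0_sub_up]
      refine .beta hb (ihp fun i => ?_) (ihq hσ)
      cases i with
      | zero => exact .var 0
      | succ i => exact (hσ i).lift 0
  | yfix hy _ ih =>
      simp only [BetaY.sub]
      exact .yfix hy (ih hσ)

theorem Par.subst0 {b y : Prop} {p p' q q' : T} (hp : Par b y p p') (hq : Par b y q q') :
    Par b y (Term.subst 0 q p) (Term.subst 0 q' p') := by
  rw [subst0_eq, subst0_eq]
  refine hp.sub fun i => ?_
  cases i with
  | zero => exact hq
  | succ i => exact .var i

/-- Single steps are parallel steps. -/
theorem CStep.toPar {b y : Prop} {t s : T} (h : CStep (Root b y) t s) : Par b y t s := by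
  induction h with
  | root h =>
      rcases h with ⟨hb, p, q, rfl, rfl⟩ | ⟨hy, p, rfl, rfl⟩
      · exact .beta hb (Par.refl p) (Par.refl q)
      · exact .yfix hy (Par.refl p)
  | appL s _ ih => exact .app ih (Par.refl s)
  | appR t _ ih => exact .app (Par.refl t) ih
  | lam _ ih => exact .lam ih

/-- Parallel steps are many steps. -/
theorem Par.toSteps {b y : Prop} {t s : T} (h : Par b y t s) :
    Relation.ReflTransGen (Step (Root b y)) t s := by
  induction h with
  | var n => exact .refl
  | const k => exact .refl
  | lam _ ih => exact ih.lift _ (fun a b h => (step_iff.2 (.lam (step_iff.1 h))))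
  | app _ _ iht ihs =>
      refine .trans (iht.lift (fun x => Term.app x _) fun a b h => ?_)
        (ihs.lift (fun x => Term.app _ x) fun a b h => ?_)
      · exact step_iff.2 (.appL _ (step_iff.1 h))
      · exact step_iff.2 (.appR _ (step_iff.1 h))
  | @beta p p' q q' hb _ _ ihp ihq =>
      refine .tail (α := T) ?_ (step_iff.2 (.root (.inl ⟨hb, p', q', rfl, rfl⟩)))
      refine .trans (ihp.lift (fun x => Term.app (Term.lam x) q) fun a b h => ?_)
        (ihq.lift (fun x => Term.app (Term.lam p') x) fun a b h => ?_)
      · exact step_iff.2 (.appL _ (.lam (step_iff.1 h)))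
      · exact step_iff.2 (.appR _ (step_iff.1 h))
  | @yfix p p' hy _ ih =>
      refine .head (step_iff.2 (.root (.inr ⟨hy, p, rfl, rfl⟩))) ?_
      refine .trans (ih.lift (fun x => Term.app x (Term.app (Term.const ()) p)) fun a b h => ?_)
        (ih.lift (fun x => Term.app p' (Term.app (Term.const ()) x)) fun a b h => ?_)
      · exact step_iff.2 (.appL _ (step_iff.1 h))
      · exact step_iff.2 (.appR _ (.appR _ (step_iff.1 h)))

end BetaY
namespace BetaY

/-! ### Internal parallel reduction -/

inductive IPar (b y : Prop) : T → T → Prop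
  | var (n) : IPar b y (.var n) (.var n)
  | const (k) : IPar b y (.const k) (.const k)
  | lam {t t'} : IPar b y t t' → IPar b y (.lam t) (.lam t')
  | app {t t' s s'} : IPar b y t t' → Par b y s s' → IPar b y (.app t s) (.app t' s')
  | appLam {p p' s s'} : Par b y p p' → Par b y s s' →
      IPar b y (.app (.lam p) s) (.app (.lam p') s')

theorem IPar.toPar {b y : Prop} {t s : T} (h : IPar b y t s) : Par b y t s := by
  induction h with
  | var n => exact .var n
  | const k => exact .const k
  | lam _ ih => exact .lam ih
  | app _ hs ih => exact .app ih hs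
  | appLam hp hs => exact .app (.lam hp) hs

theorem Root.lift {b y : Prop} {r r' : T} (h : Root b y r r') (c : ℕ) :
    Root b y (Term.lift c r) (Term.lift c r') := by
  rcases h with ⟨hb, p, q, rfl, rfl⟩ | ⟨hy, p, rfl, rfl⟩
  · exact .inl ⟨hb, Term.lift (c+1) p, Term.lift c q, by simp [Term.lift], lift_subst0 c q p⟩
  · exact .inr ⟨hy, Term.lift c p, by simp [Term.lift], by simp [Term.lift]⟩

theorem SStep.lift {b y : Prop} {t t' : T} (h : SStep (Root b y) t t') (c : ℕ) :
    SStep (Root b y) (Term.lift c t) (Term.lift c t') := by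
  induction h generalizing c with
  | root h => exact .root (h.lift c)
  | appL s _ ih =>
      simp only [Term.lift]
      exact SStep.appL (Term.lift c s) (ih c)

theorem IPar.lift {b y : Prop} {t t' : T} (h : IPar b y t t') (c : ℕ) :
    IPar b y (Term.lift c t) (Term.lift c t') := by
  induction h generalizing c with
  | var n => simp only [Term.lift]; split <;> exact .var _
  | const k => exact .const k
  | lam _ ih => exact .lam (ih (c+1))
  | app _ hs ih => exact .app (ih c) (hs.lift c)
  | appLam hp hs => exact .appLam (hp.lift (c+1)) (hs.lift c)

/-! ### The decomposition predicate -/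

/-- `t` spine-reduces to something internally-parallel to `t'`, or `t'` is an
abstraction and `t` spine-reduces to an abstraction parallel to it. -/
def SD (b y : Prop) (t t' : T) : Prop :=
  (∃ u, Relation.ReflTransGen (SStep (Root b y)) t u ∧ IPar b y u t') ∨
  (∃ p p', t' = .lam p' ∧ Relation.ReflTransGen (SStep (Root b y)) t (.lam p) ∧ Par b y p p')

def Good (b y : Prop) (σ σ' : ℕ → T) : Prop :=
  ∀ i, Par b y (σ i) (σ' i) ∧ SD b y (σ i) (σ' i)

theorem SD.lift {b y : Prop} {t t' : T} (h : SD b y t t') (c : ℕ) :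
    SD b y (Term.lift c t) (Term.lift c t') := by
  rcases h with ⟨u, hs, hi⟩ | ⟨p, p', rfl, hs, hp⟩
  · exact .inl ⟨Term.lift c u, hs.lift _ (fun a b h => h.lift c), hi.lift c⟩
  · refine .inr ⟨Term.lift (c+1) p, Term.lift (c+1) p', by simp [Term.lift], ?_, hp.lift (c+1)⟩
    have := hs.lift (Term.lift c) (fun a b h => h.lift c)
    simpa [Term.lift, Function.onFun] using this

theorem Good.up {b y : Prop} {σ σ' : ℕ → T} (h : Good b y σ σ') : Good b y (up σ) (up σ') := by
  intro i
  cases i with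
  | zero => exact ⟨.var 0, .inl ⟨.var 0, .refl, .var 0⟩⟩
  | succ i => exact ⟨((h i).1).lift 0, ((h i).2).lift 0⟩

/-- spine reduction lifted through the left of an application -/
theorem sstar_appL {b y : Prop} {t u : T} (s : T)
    (h : Relation.ReflTransGen (SStep (Root b y)) t u) :
    Relation.ReflTransGen (SStep (Root b y)) (.app t s) (.app u s) :=
  h.lift (fun x => Term.app x s) (fun _ _ h => .appL s h)

/-! ### The key decomposition lemma (Takahashi's L1, simultaneous form) -/

theorem L1s {b y : Prop} {a a' : T} (h : Par b y a a') :
    ∀ {σ σ' : ℕ → T}, Good b y σ σ' → SD b y (sub σ a) (sub σ' a') := by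
  induction h with
  | var n => intro σ σ' hσ; exact (hσ n).2
  | const k => intro σ σ' hσ; exact .inl ⟨_, .refl, .const k⟩
  | lam hpar ih =>
      intro σ σ' hσ
      exact .inr ⟨_, _, rfl, .refl, hpar.sub (fun i => (hσ.up i).1)⟩
  | @app a1 a1' a2 a2' h1 h2 ih1 ih2 =>
      intro σ σ' hσ
      rcases ih1 hσ with ⟨u, hs, hi⟩ | ⟨p, p', heq, hs, hp⟩
      · exact .inl ⟨.app u (sub σ a2), sstar_appL _ hs, .app hi (h2.sub fun i => (hσ i).1)⟩
      · refine .inl ⟨.app (.lam p) (sub σ a2), sstar_appL _ hs, ?_⟩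
        show IPar b y _ (Term.app (sub σ' a1') (sub σ' a2'))
        rw [heq]
        exact .appLam hp (h2.sub fun i => (hσ i).1)
  | @beta p p' q q' hb hp hq ihp ihq =>
      intro σ σ' hσ
      have root : SStep (Root b y) (sub σ (.app (.lam p) q))
          (sub (cons (sub σ q) σ) p) := by
        have : Term.subst 0 (sub σ q) (sub (up σ) p) = sub (cons (sub σ q) σ) p :=
          subst0_sub_up _ _ _
        exact this ▸ SStep.root (.inl ⟨hb, sub (up σ) p, sub σ q, rfl, rfl⟩)
      have hgood : Good b y (cons (sub σ q) σ) (cons (sub σ' q') σ') := by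
        intro i
        cases i with
        | zero => exact ⟨hq.sub fun i => (hσ i).1, ihq hσ⟩
        | succ i => exact hσ i
      have htarget : sub σ' (Term.subst 0 q' p') = sub (cons (sub σ' q') σ') p' :=
        sub_subst0 _ _ _
      rw [htarget]
      rcases ihp hgood with ⟨u, hs, hi⟩ | ⟨w, w', heq, hs, hw⟩
      · exact .inl ⟨u, .head root hs, hi⟩
      · rw [heq]
        exact .inr ⟨w, w', rfl, .head root hs, hw⟩
  | @yfix p p' hy hp ih =>
      intro σ σ' hσ
      have root : SStep (Root b y) (sub σ (.app (.const ()) p))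
          (.app (sub σ p) (.app (.const ()) (sub σ p))) :=
        SStep.root (.inr ⟨hy, sub σ p, rfl, rfl⟩)
      have hpar : Par b y (.app (.const ()) (sub σ p)) (.app (.const ()) (sub σ' p')) :=
        .app (.const ()) (hp.sub fun i => (hσ i).1)
      rcases ih hσ with ⟨u, hs, hi⟩ | ⟨w, w', hw', hs, hw⟩
      · exact .inl ⟨.app u (.app (.const ()) (sub σ p)),
          .head root (sstar_appL _ hs), .app hi hpar⟩
      · refine .inl ⟨.app (.lam w) (.app (.const ()) (sub σ p)),
          .head root (sstar_appL _ hs), ?_⟩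
        simp only [BetaY.sub, hw']
        exact .appLam hw (hw' ▸ hpar)

end BetaY
namespace BetaY

/-! ### Inversion lemmas -/

theorem IPar.lam_inv {b y : Prop} {u ph : T} (h : IPar b y u (.lam ph)) :
    ∃ p, u = .lam p ∧ IPar b y p ph := by
  cases h with
  | lam h => exact ⟨_, rfl, h⟩

theorem IPar.const_inv {b y : Prop} {u : T} {k : Unit} (h : IPar b y u (.const k)) :
    u = .const k := by
  cases h; rfl

/-! ### The swap lemma (Takahashi's L2) -/

theorem L2spine {b y : Prop} {u w : T} (hi : IPar b y u w) :
    ∀ {s}, SStep (Root b y) w s → ∃ v, SStep (Root b y) u v ∧ Par b y v s := by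
  induction hi with
  | var n =>
      rintro s (⟨⟨hb, p, q, heq, _⟩ | ⟨hy, p, heq, _⟩⟩ | _) <;> exact absurd heq (by simp)
  | const k =>
      rintro s (⟨⟨hb, p, q, heq, _⟩ | ⟨hy, p, heq, _⟩⟩ | _) <;> exact absurd heq (by simp)
  | lam h =>
      rintro s (⟨⟨hb, p, q, heq, _⟩ | ⟨hy, p, heq, _⟩⟩ | _) <;> exact absurd heq (by simp)
  | @app u0 w0 s0 s0' hi0 hs0 ih =>
      rintro s hstep
      cases hstep with
      | root h =>
          rcases h with ⟨hb, P, Q, heq, rfl⟩ | ⟨hy, P, heq, rfl⟩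
          · obtain ⟨rfl, rfl⟩ : w0 = .lam P ∧ s0' = Q := by
              injection heq with h1 h2; exact ⟨h1, h2⟩
            obtain ⟨p, rfl, hp⟩ := hi0.lam_inv
            exact ⟨Term.subst 0 s0 p, .root (.inl ⟨hb, p, s0, rfl, rfl⟩),
              (hp.toPar).subst0 hs0⟩
          · obtain ⟨rfl, rfl⟩ : w0 = .const () ∧ s0' = P := by
              injection heq with h1 h2; exact ⟨h1, h2⟩
            obtain rfl := hi0.const_inv
            exact ⟨.app s0 (.app (.const ()) s0), .root (.inr ⟨hy, s0, rfl, rfl⟩),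
              .app hs0 (.app (.const ()) hs0)⟩
      | appL _ h =>
          obtain ⟨v0, hv0, hpar⟩ := ih h
          exact ⟨.app v0 s0, .appL s0 hv0, .app hpar hs0⟩
  | @appLam p p' s0 s0' hp hs0 =>
      rintro s hstep
      cases hstep with
      | root h =>
          rcases h with ⟨hb, P, Q, heq, rfl⟩ | ⟨hy, P, heq, rfl⟩
          · obtain ⟨h1, rfl⟩ : Term.lam p' = .lam P ∧ s0' = Q := by
              injection heq with h1 h2; exact ⟨h1, h2⟩
            obtain rfl : p' = P := by injection h1
            exact ⟨Term.subst 0 s0 p, .root (.inl ⟨hb, p, s0, rfl, rfl⟩), hp.subst0 hs0⟩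
          · exact absurd heq (by simp)
      | appL _ h =>
          cases h with
          | root h =>
              rcases h with ⟨hb, P, Q, heq, _⟩ | ⟨hy, P, heq, _⟩ <;> exact absurd heq (by simp)

theorem L2head {b y : Prop} {w s : T} (hstep : HStep (Root b y) w s) :
    ∀ {u}, IPar b y u w → ∃ v, HStep (Root b y) u v ∧ Par b y v s := by
  induction hstep with
  | spine h =>
      intro u hi
      obtain ⟨v, hv, hpar⟩ := L2spine hi h
      exact ⟨v, .spine hv, hpar⟩
  | lam _ ih =>
      intro u hi
      obtain ⟨u0, rfl, hi0⟩ := hi.lam_inv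
      obtain ⟨v, hv, hpar⟩ := ih hi0
      exact ⟨.lam v, .lam hv, .lam hpar⟩

/-! ### Head decomposition of a parallel step -/

theorem L1 {b y : Prop} (t' : T) : ∀ t, Par b y t t' →
    ∃ u, Relation.ReflTransGen (HStep (Root b y)) t u ∧ IPar b y u t' := by
  induction t' with
  | var n =>
      intro t h
      have h1 := L1s h (σ := Term.var) (σ' := Term.var)
        (fun i => ⟨.var i, .inl ⟨_, .refl, .var i⟩⟩)
      rw [sub_var, sub_var] at h1
      rcases h1 with ⟨u, hs, hi⟩ | ⟨p, p', heq, _, _⟩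
      · exact ⟨u, Relation.ReflTransGen.mono (fun _ _ h => .spine h) _ _ hs, hi⟩
      · exact absurd heq (by simp)
  | const k =>
      intro t h
      have h1 := L1s h (σ := Term.var) (σ' := Term.var)
        (fun i => ⟨.var i, .inl ⟨_, .refl, .var i⟩⟩)
      rw [sub_var, sub_var] at h1
      rcases h1 with ⟨u, hs, hi⟩ | ⟨p, p', heq, _, _⟩
      · exact ⟨u, Relation.ReflTransGen.mono (fun _ _ h => .spine h) _ _ hs, hi⟩
      · exact absurd heq (by simp)
  | app t1 t2 ih1 ih2 =>
      intro t h
      have h1 := L1s h (σ := Term.var) (σ' := Term.var)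
        (fun i => ⟨.var i, .inl ⟨_, .refl, .var i⟩⟩)
      rw [sub_var, sub_var] at h1
      rcases h1 with ⟨u, hs, hi⟩ | ⟨p, p', heq, _, _⟩
      · exact ⟨u, Relation.ReflTransGen.mono (fun _ _ h => .spine h) _ _ hs, hi⟩
      · exact absurd heq (by simp)
  | lam q' ih =>
      intro t h
      have h1 := L1s h (σ := Term.var) (σ' := Term.var)
        (fun i => ⟨.var i, .inl ⟨_, .refl, .var i⟩⟩)
      rw [sub_var, sub_var] at h1
      rcases h1 with ⟨u, hs, hi⟩ | ⟨p, p', heq, hs, hp⟩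
      · exact ⟨u, Relation.ReflTransGen.mono (fun _ _ h => .spine h) _ _ hs, hi⟩
      · obtain rfl : p' = q' := by injection heq with h1; exact h1.symm
        obtain ⟨u0, hu0, hi0⟩ := ih p hp
        refine ⟨.lam u0, ?_, .lam hi0⟩
        exact .trans (Relation.ReflTransGen.mono (fun _ _ h => .spine h) _ _ hs)
          (hu0.lift Term.lam (fun _ _ h => .lam h))

/-! ### Assembly -/

theorem A3 {b y : Prop} {t w s : T} (h : Par b y t w) (hstep : HStep (Root b y) w s) :
    ∃ v, Relation.ReflTransGen (HStep (Root b y)) t v ∧ Par b y v s := by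
  obtain ⟨u, hu, hi⟩ := L1 w t h
  obtain ⟨v, hv, hpar⟩ := L2head hstep hi
  exact ⟨v, .tail hu hv, hpar⟩

theorem A4 {b y : Prop} {t w s : T} (h : Par b y t w)
    (hsteps : Relation.ReflTransGen (HStep (Root b y)) w s) :
    ∃ v, Relation.ReflTransGen (HStep (Root b y)) t v ∧ Par b y v s := by
  induction hsteps with
  | refl => exact ⟨t, .refl, h⟩
  | tail _ hstep ih =>
      obtain ⟨v, hv, hpar⟩ := ih
      obtain ⟨v2, hv2, hpar2⟩ := A3 hpar hstep
      exact ⟨v2, .trans hv hv2, hpar2⟩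

theorem factor {b y : Prop} {t s : T} (h : Relation.ReflTransGen (Par b y) t s) :
    ∃ u, Relation.ReflTransGen (HStep (Root b y)) t u ∧
      Relation.ReflTransGen (IPar b y) u s := by
  induction h using Relation.ReflTransGen.head_induction_on with
  | refl => exact ⟨s, .refl, .refl⟩
  | head hpar _ ih =>
      obtain ⟨u', hu', hi'⟩ := ih
      obtain ⟨v, hv, hpar2⟩ := A4 hpar hu'
      obtain ⟨u'', hu'', hi''⟩ := L1 _ v hpar2
      exact ⟨u'', .trans hv hu'', .head hi'' hi'⟩

/-! ### Internal parallel steps are non-head reductions -/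

theorem IPar.toNonHead {b y : Prop} {t s : T} (h : IPar b y t s) :
    Relation.ReflTransGen (NonHeadStep (Root b y)) t s := by
  induction h with
  | var n => exact .refl
  | const k => exact .refl
  | lam _ ih => exact ih.lift Term.lam (fun _ _ h => nh_lam h)
  | @app t t' s0 s0' _ hs ih =>
      refine .trans (ih.lift (fun x => Term.app x s0) (fun _ _ h => nh_appL s0 h)) ?_
      exact (hs.toSteps).lift (fun x => Term.app t' x) (fun _ _ h => nh_appR t' h)
  | @appLam p p' s0 s0' hp hs =>
      refine .trans ((hp.toSteps).lift (fun x => Term.app (Term.lam x) s0)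
        (fun _ _ h => nh_appL_lam s0 h)) ?_
      exact (hs.toSteps).lift (fun x => Term.app (Term.lam p') x)
        (fun _ _ h => nh_appR _ h)

end BetaY
namespace BetaY

/-! ### Conversions between presentations -/

theorem headStep_of_hstep {R : T → T → Prop} {t s : T} (h : HStep R t s) : HeadStep R t s :=
  headstep_iff.2 h

theorem hstep_mono {R R' : T → T → Prop} (hm : ∀ r r', R r r' → R' r r') {t s : T}
    (h : HStep R t s) : HStep R' t s := by
  induction h with
  | spine h =>
      apply HStep.spine
      induction h with
      | root h => exact .root (hm _ _ h)
      | appL s _ ih => exact .appL s ih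
  | lam _ ih => exact .lam ih

theorem step_mono {R R' : T → T → Prop} (hm : ∀ r r', R r r' → R' r r') {t s : T}
    (h : Step R t s) : Step R' t s := by
  obtain ⟨C, r, r', hr, rfl, rfl⟩ := h
  exact ⟨C, r, r', hm _ _ hr, rfl, rfl⟩

theorem nonhead_mono {R R' : T → T → Prop} (hm : ∀ r r', R r r' → R' r r') {t s : T}
    (h : NonHeadStep R t s) : NonHeadStep R' t s := by
  obtain ⟨C, r, r', hC, hr, rfl, rfl⟩ := h
  exact ⟨C, r, r', hC, hm _ _ hr, rfl, rfl⟩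

theorem headstep_toStep {R : T → T → Prop} {t s : T} (h : HeadStep R t s) : Step R t s := by
  obtain ⟨C, r, r', _, hr, rfl, rfl⟩ := h
  exact ⟨C, r, r', hr, rfl, rfl⟩

theorem nonheadstep_toStep {R : T → T → Prop} {t s : T} (h : NonHeadStep R t s) : Step R t s := by
  obtain ⟨C, r, r', _, hr, rfl, rfl⟩ := h
  exact ⟨C, r, r', hr, rfl, rfl⟩

/-- Generic head factorization for the calculus with flags `b`, `y`. -/
theorem main_factor {b y : Prop} {t s : T}
    (h : Relation.ReflTransGen (Step (Root b y)) t s) :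
    ∃ u, Relation.ReflTransGen (HeadStep (Root b y)) t u ∧
      Relation.ReflTransGen (NonHeadStep (Root b y)) u s := by
  have hpar : Relation.ReflTransGen (Par b y) t s :=
    Relation.ReflTransGen.mono (fun _ _ hst => (step_iff.1 hst).toPar) _ _ h
  obtain ⟨u, hu, hi⟩ := factor hpar
  refine ⟨u, Relation.ReflTransGen.mono (fun _ _ h => headStep_of_hstep h) _ _ hu, ?_⟩
  exact Relation.ReflTransGen.trans_induction_on hi
    (fun _ => .refl)
    (fun h => h.toNonHead)
    (fun _ _ ih1 ih2 => .trans ih1 ih2)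

end BetaY

open BetaY

/-- Head factorization of βY: →β ∪ →Y satisfies head factorization; in particular
→Y head-factorizes, the root linear swap ¬h→β · ↦Y ⊆ h→Y · (→β)* holds, and
↦Y is substitutive. -/
theorem head_factorization_betaY :
    (∀ t s : Term Unit,
      Relation.ReflTransGen (fun a b => Step BetaRoot a b ∨ Step YRoot a b) t s →
      ∃ u, Relation.ReflTransGen
          (fun a b => HeadStep BetaRoot a b ∨ HeadStep YRoot a b) t u ∧
        Relation.ReflTransGen
          (fun a b => NonHeadStep BetaRoot a b ∨ NonHeadStep YRoot a b) u s)
    ∧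
    (∀ t s : Term Unit,
      Relation.ReflTransGen (fun a b => HeadStep YRoot a b ∨ NonHeadStep YRoot a b) t s →
      ∃ u, Relation.ReflTransGen (HeadStep YRoot) t u ∧
        Relation.ReflTransGen (NonHeadStep YRoot) u s)
    ∧
    (∀ t u s : Term Unit, NonHeadStep BetaRoot t u → YRoot u s →
      ∃ v, HeadStep YRoot t v ∧ Relation.ReflTransGen (Step BetaRoot) v s)
    ∧
    Substitutive YRoot := by
  refine ⟨?_, ?_, ?_, ?_⟩
  · -- βY head factorization
    intro t s h
    have h' : Relation.ReflTransGen (Step (Root True True)) t s := by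
      refine Relation.ReflTransGen.mono (fun a b hab => ?_) _ _ h
      rcases hab with h | h
      · exact step_mono (fun r r' hr => .inl ⟨trivial, hr⟩) h
      · exact step_mono (fun r r' hr => .inr ⟨trivial, hr⟩) h
    obtain ⟨u, hu, hn⟩ := main_factor h'
    refine ⟨u, Relation.ReflTransGen.mono (fun a b hab => ?_) _ _ hu, Relation.ReflTransGen.mono (fun a b hab => ?_) _ _ hn⟩
    · obtain ⟨C, r, r', hC, hr, rfl, rfl⟩ := hab
      rcases hr with ⟨_, hr⟩ | ⟨_, hr⟩
      · exact .inl ⟨C, r, r', hC, hr, rfl, rfl⟩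
      · exact .inr ⟨C, r, r', hC, hr, rfl, rfl⟩
    · obtain ⟨C, r, r', hC, hr, rfl, rfl⟩ := hab
      rcases hr with ⟨_, hr⟩ | ⟨_, hr⟩
      · exact .inl ⟨C, r, r', hC, hr, rfl, rfl⟩
      · exact .inr ⟨C, r, r', hC, hr, rfl, rfl⟩
  · -- Y head factorization
    intro t s h
    have h' : Relation.ReflTransGen (Step (Root False True)) t s := by
      refine Relation.ReflTransGen.mono (fun a b hab => ?_) _ _ h
      rcases hab with h | h
      · exact step_mono (fun r r' hr => .inr ⟨trivial, hr⟩) (headstep_toStep h)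
      · exact step_mono (fun r r' hr => .inr ⟨trivial, hr⟩) (nonheadstep_toStep h)
    obtain ⟨u, hu, hn⟩ := main_factor h'
    refine ⟨u, Relation.ReflTransGen.mono (fun a b hab => ?_) _ _ hu, Relation.ReflTransGen.mono (fun a b hab => ?_) _ _ hn⟩
    · obtain ⟨C, r, r', hC, hr, rfl, rfl⟩ := hab
      rcases hr with ⟨hf, _⟩ | ⟨_, hr⟩
      · exact hf.elim
      · exact ⟨C, r, r', hC, hr, rfl, rfl⟩
    · obtain ⟨C, r, r', hC, hr, rfl, rfl⟩ := hab
      rcases hr with ⟨hf, _⟩ | ⟨_, hr⟩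
      · exact hf.elim
      · exact ⟨C, r, r', hC, hr, rfl, rfl⟩
  · -- root linear swap
    rintro t u s ⟨C, r, r', hC, hr, rfl, hu⟩ ⟨p, hp, rfl⟩
    have heq : C.plug r' = Term.app (Term.const ()) p := hu.symm.trans hp
    cases C with
    | hole => exact absurd (Ctx.IsHead.spine .hole) hC
    | lam C' => simp [Ctx.plug] at heq
    | appL C' t2 =>
        simp only [Ctx.plug] at heq
        injection heq with h1 h2
        cases C' with
        | hole => exact absurd (Ctx.IsHead.spine (.appL t2 .hole)) hC
        | appL _ _ => simp [Ctx.plug] at h1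
        | appR _ _ => simp [Ctx.plug] at h1
        | lam _ => simp [Ctx.plug] at h1
    | appR t1 C' =>
        simp only [Ctx.plug] at heq
        injection heq with h1 h2
        subst h1
        subst h2
        refine ⟨Term.app (C'.plug r) (Term.app (Term.const ()) (C'.plug r)),
          ⟨.hole, _, _, .spine .hole, ⟨C'.plug r, rfl, rfl⟩, by simp [Ctx.plug], rfl⟩, ?_⟩
        refine Relation.ReflTransGen.head
          (⟨.appL C' (Term.app (Term.const ()) (C'.plug r)), r, r', hr, rfl, rfl⟩ :
            Step BetaRoot _ _) ?_
        exact Relation.ReflTransGen.single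
          ⟨.appR (C'.plug r') (.appR (Term.const ()) C'), r, r', hr, rfl, rfl⟩
  · rintro r r' n q ⟨p, rfl, rfl⟩
    exact ⟨Term.subst n q p, by simp [Term.subst], by simp [Term.subst]⟩
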